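/- Let F be a field and a ∈ F with a ≠ 1 and a ≠ 2, set b = a, and let x, y be the 7×7 matrices of the dimension-7 setup. Then the seventh power of the commutator of x and y is not the identity: (x·y·x⁻¹·y⁻¹)⁷ ≠ I. (This is the computational content of the fact that ⟨x,y⟩ is not contained in a subgroup isomorphic to Sp₆(2), in which the commutator of an involution and an order-3 element generating the group has order 7.) -/

import Mathlib

/-!
Since `x² = y³ = 1`, the commutator is `c = x y x y²`, an explicit integral matrix in `a, b`.
Splitting `c⁷ = c³ c⁴`, the `(6, 4)` entry of `c⁷` is the product of row `6` of `c³` with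
column `4` of `c⁴`, and equals `-(a - 2)(b - 2)`, whereas that entry of the identity is `0`.
-/

open Matrix

namespace Dim7

variable {R : Type*} [CommRing R] (a b : R)

def x : Matrix (Fin 7) (Fin 7) R :=
  !![0,1,0,0,0,0,a; 1,0,0,0,0,0,a; 0,0,0,1,0,0,0; 0,0,1,0,0,0,0;
    0,0,0,0,0,1,-1; 0,0,0,0,1,0,-1; 0,0,0,0,0,0,-1]

def y : Matrix (Fin 7) (Fin 7) R :=
  !![1,0,-1,0,-1,0,a+b-1; 0,0,-1,0,0,0,0; 0,1,-1,0,0,0,0; 0,0,0,0,-1,0,0;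
    0,0,0,1,-1,0,0; 0,0,0,0,0,0,-1; 0,0,0,0,0,1,-1]

def commutator : Matrix (Fin 7) (Fin 7) R :=
  !![0,0,0,1-a,-1,0,0; 0,-1,1,1-a,-1,b-1,-1; 0,0,0,0,0,0,-1; 1,-1,0,0,-1,b-1,0;
    0,0,0,1,0,-1,0; 0,-1,0,1,0,0,-1; 0,0,0,1,0,0,0]

theorem x_mul_x : x a * x a = 1 := by
  ext i j
  fin_cases i <;> fin_cases j <;> simp [x, mul_apply, Fin.sum_univ_seven, one_apply]

theorem y_mul_y : y a b * y a b =
    !![1,-1,0,-1,0,a+b-1,0; 0,-1,1,0,0,0,0; 0,-1,0,0,0,0,0; 0,0,0,-1,1,0,0;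
      0,0,0,-1,0,0,0; 0,0,0,0,0,-1,1; 0,0,0,0,0,-1,0] := by
  simp [y]

theorem y_mul_y_mul_y : y a b * (y a b * y a b) = 1 := by
  rw [y_mul_y]
  ext i j
  fin_cases i <;> fin_cases j <;> simp [y, mul_apply, Fin.sum_univ_seven, one_apply]

theorem x_mul_y_mul_x_mul_y_mul_y : x a * y a b * x a * (y a b * y a b) = commutator a b := by
  simp only [x, y, commutator, cons_mul, Nat.succ_eq_add_one, Nat.reduceAdd, vecMul_cons, head_cons,
    zero_smul, tail_cons, one_smul, smul_cons, smul_eq_mul, mul_zero, mul_one, mul_neg, smul_empty,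
    empty_vecMul, add_zero, zero_add, add_cons, empty_add_empty, neg_smul, neg_cons, neg_zero,
    neg_neg, neg_empty, neg_add_cancel, empty_mul, Equiv.symm_apply_apply,
    EmbeddingLike.apply_eq_iff_eq, vecCons_inj, and_true, true_and]
  constructorm* _ ∧ _ <;> ring

theorem x_mul_y_mul_x_inv_mul_y_inv : x a * y a b * (x a)⁻¹ * (y a b)⁻¹ = commutator a b := by
  rw [inv_eq_right_inv (x_mul_x a), inv_eq_right_inv (y_mul_y_mul_y a b),
    x_mul_y_mul_x_mul_y_mul_y]

theorem commutator_pow_three_row_six :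
    (commutator a b ^ 3) 6 = ![0, 2 - b, -1, b - 2, 0, 2 - b, 2 - b] := by
  ext k
  fin_cases k <;> simp [commutator, pow_succ, mul_apply, Fin.sum_univ_seven] <;> ring

theorem commutator_pow_four_col_four :
    (fun k => (commutator a b ^ 4) k 4) =
      ![0, (1 - a) * (b - 2), 0, (1 - a) * (b - 2), a - 1, a - 2, 0] := by
  ext k
  fin_cases k <;> simp [commutator, pow_succ, mul_apply, Fin.sum_univ_seven] <;> ring

theorem commutator_pow_seven_apply_six_four :
    (commutator a b ^ 7) 6 4 = -((a - 2) * (b - 2)) := by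
  rw [show commutator a b ^ 7 = commutator a b ^ 3 * commutator a b ^ 4 by rw [← pow_add],
    mul_apply', commutator_pow_three_row_six, commutator_pow_four_col_four]
  simp only [dotProduct, Fin.sum_univ_seven, cons_val_zero, cons_val_one, cons_val]
  ring

theorem commutator_pow_seven_ne_one [NoZeroDivisors R] (ha : a ≠ 2) (hb : b ≠ 2) :
    commutator a b ^ 7 ≠ 1 := by
  intro h
  have h64 := commutator_pow_seven_apply_six_four a b
  rw [h, one_apply_ne (by decide), zero_eq_neg] at h64
  exact mul_ne_zero (sub_ne_zero.mpr ha) (sub_ne_zero.mpr hb) h64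

end Dim7

theorem dim7_commutator_seventh_power_ne_one_general (F : Type) [Field F] (a : F)
    (ha2 : a ≠ 2) (x y : Matrix (Fin 7) (Fin 7) F)
    (hx : x = !![0,1,0,0,0,0,a; 1,0,0,0,0,0,a; 0,0,0,1,0,0,0; 0,0,1,0,0,0,0;
      0,0,0,0,0,1,-1; 0,0,0,0,1,0,-1; 0,0,0,0,0,0,-1])
    (hy : y = !![1,0,-1,0,-1,0,a+a-1; 0,0,-1,0,0,0,0; 0,1,-1,0,0,0,0; 0,0,0,0,-1,0,0;
      0,0,0,1,-1,0,0; 0,0,0,0,0,0,-1; 0,0,0,0,0,1,-1]) :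
    (x * y * x⁻¹ * y⁻¹) ^ 7 ≠ 1 := by
  obtain rfl : x = Dim7.x a := hx
  obtain rfl : y = Dim7.y a a := hy
  rw [Dim7.x_mul_y_mul_x_inv_mul_y_inv]
  exact Dim7.commutator_pow_seven_ne_one a a ha2 ha2

/-- **The commutator `[x,y]` does not have order 7.** Let `F` be a field and `a ∈ F` with
`a ≠ 1` and `a ≠ 2`, with `b = a`, and let `x, y` be the matrices of the dimension-7
setup. Then `(x·y·x⁻¹·y⁻¹)⁷ ≠ 1`. (Hence `⟨x,y⟩` is not contained in a subgroup
isomorphic to `Sp_6(2)`.) -/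
theorem dim7_commutator_seventh_power_ne_one (F : Type) [Field F] (a : F)
    (ha1 : a ≠ 1) (ha2 : a ≠ 2) (x y : Matrix (Fin 7) (Fin 7) F)
    (hx : x = !![0,1,0,0,0,0,a; 1,0,0,0,0,0,a; 0,0,0,1,0,0,0; 0,0,1,0,0,0,0;
      0,0,0,0,0,1,-1; 0,0,0,0,1,0,-1; 0,0,0,0,0,0,-1])
    (hy : y = !![1,0,-1,0,-1,0,a+a-1; 0,0,-1,0,0,0,0; 0,1,-1,0,0,0,0; 0,0,0,0,-1,0,0;
      0,0,0,1,-1,0,0; 0,0,0,0,0,0,-1; 0,0,0,0,0,1,-1]) :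
    (x * y * x⁻¹ * y⁻¹) ^ 7 ≠ 1 :=
  dim7_commutator_seventh_power_ne_one_general F a ha2 x y hx hy
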